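/- arXiv:1904.05804 — 2 statements merged into one kernel-verified Lean document; each statement's English description precedes it below -/
import Mathlib

section
/- Let G=(V,E) be a connected, locally finite graph, let p∈[0,1], and let n,m ≥ 0. Then for all u,v∈V, A^int_{p,n,n+m}(u,v) ≤ Σ_{w∈V} S^int_{p,n}(u,w) · B^int_{p,m}(w,v); that is, entrywise, A^int_{p,n,n+m} is dominated by the matrix product S^int_{p,n} B^int_{p,m} (equivalently, by symmetry, by B^int_{p,m} S^int_{p,n}). -/
open MeasureTheory Filter Set
open scoped ENNReal NNReal

noncomputable section

namespace Percolation

/-! ### The Bernoulli product measure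

Since the current version of Mathlib does not provide infinite products of probability
measures, we construct the Bernoulli product measure on `I → Bool` (for countable `I`,
the only relevant case: the edge set of a connected locally finite graph is countable)
as the pushforward of the uniform measure on `[0,1)` under the standard Borel
isomorphism extracting independent uniform random variables from the binary digits of
a single uniform random variable. -/

/-- The `j`-th binary digit of a real number `x ∈ [0,1)`. -/
def rbit (j : ℕ) (x : ℝ) : Bool := decide (⌊x * 2 ^ (j + 1)⌋ % 2 = 1)

/-- A sequence of i.i.d. Uniform`[0,1]` random variables of a single uniform random
variable `x`, obtained by splitting the binary digits of `x` into countably many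
subsequences. -/
def unifSeq (i : ℕ) (x : ℝ) : ℝ :=
  ∑' j : ℕ, if rbit (Nat.pair i j) x then ((2 : ℝ) ^ (j + 1))⁻¹ else 0

/-- The product measure `⊗_{i ∈ I} Bernoulli(p i)` on `I → Bool`: coordinates are
independent, and coordinate `i` equals `true` with probability `p i`.  It is realized as
the pushforward of the uniform measure on `[0,1)` under the map sending `x` to the
configuration `fun i => (unifSeq (enc i) x < p i)`, where `enc : I ↪ ℕ`.  (For uncountable
`I`, which never occurs in our applications, we use the junk value `0`.) -/
def bernoulliProduct (I : Type*) (p : I → ℝ) : Measure (I → Bool) := by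
  classical
  exact if h : Countable I then
    Measure.map
      (fun x i => decide (unifSeq ((@Countable.exists_injective_nat I h).choose i) x < p i))
      (volume.restrict (Set.Ico (0 : ℝ) 1))
  else 0

variable {V : Type*} (G : SimpleGraph V)

/-- A percolation configuration: each edge of `G` is open (`true`) or closed (`false`). -/
abbrev Config := G.edgeSet → Bool

/-- The law of Bernoulli-`p` bond percolation on `G`: every edge is open independently
with probability `p`. -/
def percMeasure (p : ℝ) : Measure (Config G) :=
  bernoulliProduct G.edgeSet fun _ => p

/-- The subgraph `G[p]` of open edges determined by a configuration `ω`. -/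
def openGraph (ω : Config G) : SimpleGraph V where
  Adj u v := ∃ h : G.Adj u v, ω ⟨s(u, v), G.mem_edgeSet.mpr h⟩ = true
  symm := by
    constructor
    rintro u v ⟨h, hw⟩
    refine ⟨h.symm, ?_⟩
    have he : (⟨s(v, u), G.mem_edgeSet.mpr h.symm⟩ : G.edgeSet)
        = ⟨s(u, v), G.mem_edgeSet.mpr h⟩ := Subtype.ext (Sym2.eq_swap)
    rw [he]; exact hw
  loopless := ⟨fun v h => G.loopless.irrefl v h.1⟩

/-- The cluster of `v`: the set of vertices joined to `v` by an open path. -/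
def cluster (ω : Config G) (v : V) : Set V := {u | (openGraph G ω).Reachable v u}

/-- The two-point function `τ_p(u,v) = P_p(u ↔ v)`. -/
def tau (p : ℝ) (u v : V) : ℝ≥0∞ :=
  percMeasure G p {ω | (openGraph G ω).Reachable u v}

/-- The `ℓ^q` norm of a nonnegative function on `V`, `q ∈ [1,∞]`. -/
def lqNorm (q : ℝ≥0∞) (f : V → ℝ≥0∞) : ℝ≥0∞ :=
  if q = ∞ then ⨆ v, f v else (∑' v, f v ^ q.toReal) ^ (1 / q.toReal)

/-- The product of a nonnegative matrix with a nonnegative function. -/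
def matMul (M : V → V → ℝ≥0∞) (f : V → ℝ≥0∞) : V → ℝ≥0∞ := fun v => ∑' u, M v u * f u

/-- The `L^q → L^q` operator norm `‖M‖_{q→q}` of a nonnegative matrix `M`:
the supremum of `‖Mf‖_q / ‖f‖_q` over nonzero nonnegative `f ∈ L^q(V)`. -/
def opNorm (q : ℝ≥0∞) (M : V → V → ℝ≥0∞) : ℝ≥0∞ :=
  ⨆ f : {f : V → ℝ≥0∞ // f ≠ 0 ∧ lqNorm q f ≠ ∞},
    lqNorm q (matMul M f.1) / lqNorm q f.1

/-- `p_{q→q}(G)`, the supremum of those `p ∈ [0,1]` with `‖T_p‖_{q→q} < ∞`. -/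
def pqq (q : ℝ≥0∞) : ℝ :=
  sSup {p : ℝ | p ∈ Set.Icc (0 : ℝ) 1 ∧ opNorm q (tau G p) < ∞}

/-- The critical probability `p_c(G)`: the infimum of those `p` for which `G[p]` has an
infinite cluster almost surely. -/
def pc : ℝ :=
  sInf {p : ℝ | p ∈ Set.Icc (0 : ℝ) 1 ∧
    percMeasure G p {ω | ∃ v : V, (cluster G ω v).Infinite} = 1}

/-- `G` is (vertex-)transitive: `Aut(G)` acts transitively on `V`. -/
def VertexTransitive : Prop := ∀ u v : V, ∃ φ : G ≃g G, φ u = v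

/-- `G` is quasi-transitive: the action of `Aut(G)` on `V` has finitely many orbits. -/
def QuasiTransitive : Prop := ∃ S : Finset V, ∀ v : V, ∃ φ : G ≃g G, φ v ∈ S

/-- The set of edges of `G` with exactly one endpoint in `K`. -/
def edgeBoundary (K : Set V) : Set (Sym2 V) :=
  {e | e ∈ G.edgeSet ∧ ∃ u v : V, e = s(u, v) ∧ u ∈ K ∧ v ∉ K}

/-- `G` is nonamenable: some `c > 0` has `|∂_E K| ≥ c ∑_{v ∈ K} deg(v)` for all finite `K`. -/
def Nonamenable : Prop :=
  ∃ c : ℝ, 0 < c ∧ ∀ K : Finset V,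
    c * ∑ v ∈ K, ((G.neighborSet v).ncard : ℝ) ≤ ((edgeBoundary G (K : Set V)).ncard : ℝ)

/-- The matrix `C_{p,n}(u,v) = τ_p(u,v) 𝟙[d(u,v) ≥ n]`. -/
def Cmat (p : ℝ) (n : ℕ) : V → V → ℝ≥0∞ :=
  fun u v => if n ≤ G.dist u v then tau G p u v else 0

/-- The matrix `S_{p,n}(u,v) = τ_p(u,v) 𝟙[d(u,v) = n]`. -/
def Smat (p : ℝ) (n : ℕ) : V → V → ℝ≥0∞ :=
  fun u v => if G.dist u v = n then tau G p u v else 0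

/-- The matrix `B_{p,n}(u,v) = τ_p(u,v) 𝟙[d(u,v) ≤ n]`. -/
def Bmat (p : ℝ) (n : ℕ) : V → V → ℝ≥0∞ :=
  fun u v => if G.dist u v ≤ n then tau G p u v else 0

/-- The matrix `C^int_{p,n}(u,v) = P_p(u ↔ v and d_int(u,v) ≥ n)`. -/
def CintMat (p : ℝ) (n : ℕ) : V → V → ℝ≥0∞ :=
  fun u v => percMeasure G p
    {ω | (openGraph G ω).Reachable u v ∧ (n : ℕ∞) ≤ (openGraph G ω).edist u v}

/-- The matrix `B^int_{p,n}(u,v) = P_p(d_int(u,v) ≤ n)`. -/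
def BintMat (p : ℝ) (n : ℕ) : V → V → ℝ≥0∞ :=
  fun u v => percMeasure G p {ω | (openGraph G ω).edist u v ≤ (n : ℕ∞)}

/-- The matrix `S^int_{p,n}(u,v) = P_p(d_int(u,v) = n)`. -/
def SintMat (p : ℝ) (n : ℕ) : V → V → ℝ≥0∞ :=
  fun u v => percMeasure G p {ω | (openGraph G ω).edist u v = (n : ℕ∞)}

/-- The matrix `A^int_{p,n,m}(u,v) = P_p(n ≤ d_int(u,v) ≤ m)`. -/
def AintMat (p : ℝ) (n m : ℕ) : V → V → ℝ≥0∞ :=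
  fun u v => percMeasure G p
    {ω | (n : ℕ∞) ≤ (openGraph G ω).edist u v ∧ (openGraph G ω).edist u v ≤ (m : ℕ∞)}

/-- `sup { τ_p(u,v) : d(u,v) ≥ n }`. -/
def supTau (p : ℝ) (n : ℕ) : ℝ≥0∞ :=
  ⨆ (u : V) (v : V) (_ : n ≤ G.dist u v), tau G p u v

/-- The exponential decay rate `ξ_p` of the two-point function. -/
def xi (p : ℝ) : ℝ :=
  - Filter.limsup (fun n : ℕ => Real.log (supTau G p n).toReal / n) Filter.atTop

/-- The exponential connectivity decay threshold `p_exp(G)`. -/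
def pexp : ℝ := sSup {p : ℝ | p ∈ Set.Icc (0 : ℝ) 1 ∧ 0 < xi G p}

/-- The ball of radius `n` about `v` in the graph metric of `G`. -/
def gball (v : V) (n : ℕ) : Set V := {u | G.dist v u ≤ n}

/-- The exponential volume growth rate `γ(G) = lim (1/n) sup_v log |B(v,n)|`. -/
def gammaGrowth : ℝ :=
  Filter.limsup
    (fun n : ℕ => sSup {x : ℝ | ∃ v : V, x = Real.log ((gball G v n).ncard : ℝ)} / n)
    Filter.atTop

/-- The extrinsic radius `rad(K_v) = sup { d(v,u) : u ∈ K_v }` (valued in `ℕ∞`). -/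
def extRad (ω : Config G) (v : V) : ℕ∞ :=
  ⨆ u ∈ cluster G ω v, (G.dist v u : ℕ∞)

/-- The intrinsic radius `rad_int(K_v) = sup { d_int(v,u) : u ∈ K_v }` (valued in `ℕ∞`). -/
def intRad (ω : Config G) (v : V) : ℕ∞ :=
  ⨆ u ∈ cluster G ω v, (openGraph G ω).edist v u

/-- The expected number of vertices of `W` in the cluster of `v`, `E_p |K_v ∩ W|`. -/
def expClusterInter (p : ℝ) (v : V) (W : Set V) : ℝ≥0∞ :=
  ∫⁻ ω, ((cluster G ω v ∩ W).encard : ℝ≥0∞) ∂(percMeasure G p)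

/-- The annealed upper logarithmic density of clusters. -/
def deltaLog (p : ℝ) : ℝ :=
  Filter.limsup
    (fun n : ℕ => sSup {x : ℝ | ∃ v : V,
      x = Real.log (expClusterInter G p v (gball G v n)).toReal /
          Real.log ((gball G v n).ncard : ℝ)})
    Filter.atTop

/-- A walk in `G` all of whose edges are open in the configuration `ω`. -/
def IsOpenWalk (ω : Config G) {a b : V} (w : G.Walk a b) : Prop :=
  ∀ e : Sym2 V, ∀ he : e ∈ w.edges, ω ⟨e, w.edges_subset_edgeSet he⟩ = true

/-- Joint law of Bernoulli-`p` percolation and `ℓ` independent ghost fields with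
intensities `h 0, …, h (ℓ-1)`: the configuration space is indexed by
`G.edgeSet ⊕ (Fin ℓ × V)`, the first summand carrying the percolation configuration and
the second carrying the ghost fields; a vertex belongs to the `i`-th ghost field with
probability `1 - exp (-h i)`. -/
def ghostJoint (p : ℝ) (ℓ : ℕ) (h : Fin ℓ → ℝ) :
    Measure ((G.edgeSet ⊕ (Fin ℓ × V)) → Bool) :=
  bernoulliProduct _ (Sum.elim (fun _ => p) (fun iv => 1 - Real.exp (-h iv.1)))

/-- The percolation configuration in the joint percolation/ghost-field space. -/
def percPart {ℓ : ℕ} (x : (G.edgeSet ⊕ (Fin ℓ × V)) → Bool) : Config G :=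
  fun e => x (Sum.inl e)

/-- The magnetization `M_{p,h}(v) = P_{p,h}(v ↔ 𝒢)`. -/
def mag (p h : ℝ) (v : V) : ℝ≥0∞ :=
  ghostJoint G p 1 (fun _ => h)
    {x | ∃ t : V, x (Sum.inr (0, t)) = true ∧
      (openGraph G (percPart G x)).Reachable v t}

/-- `v` is a trifurcation point of the configuration `ω`: its cluster is infinite, and
deleting `v` splits the cluster into exactly three infinite clusters. -/
def IsTrifurcation (ω : Config G) (v : V) : Prop :=
  (cluster G ω v).Infinite ∧
  {C : ((openGraph G ω).induce {u : V | u ≠ v}).ConnectedComponent |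
      (Subtype.val '' C.supp).Infinite ∧ Subtype.val '' C.supp ⊆ cluster G ω v}.encard = 3

end Percolation

open Percolation MeasureTheory ProbabilityTheory Filter Set
open scoped ENNReal

/-!
Explore the open cluster of `u` up to intrinsic distance `n`: the explored edges are those
with an endpoint at intrinsic distance `< n` from `u`. They form a stopping set: whether
`ω` agrees with `ω₀` on the edges explored in `ω₀` is a condition on those edges alone, and
under it `ω` explores the same edges and has the same intrinsic distances `≤ n` from `u`.
If `n ≤ d_int(u, v) ≤ n + m`, the vertex `w` at distance `n` along an open geodesic has
`d_int(u, w) = n`, and the rest of the geodesic is an open path of length `≤ m` from `w` to `v`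
that avoids the explored edges. Summing over the outcomes of the exploration and using the
independence of disjoint sets of edges gives the bound by `∑_w S^int_n(u, w) B^int_m(w, v)`.

The independence of disjoint sets of coordinates under `bernoulliProduct` comes from the
independence of the binary digits of a uniform point of `[0, 1)`: on each of the `2 ^ N`
dyadic intervals of length `2 ^ (-N)` the first `N` digits are constant.
-/

local notation "μ₀" => volume.restrict (Set.Ico (0 : ℝ) 1)

namespace Percolation

open Finset in
lemma lt_two_pow_iff_bitIndices_subset {k N : ℕ} : k < 2 ^ N ↔ equivBitIndices k ⊆ range N := by
  simp only [equivBitIndices_apply, Finset.subset_iff, List.mem_toFinset, Nat.mem_bitIndices,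
    Finset.mem_range]
  refine ⟨fun hk i hi => ?_, fun h => Nat.lt_pow_two_of_testBit k fun i hi => ?_⟩
  · exact (Nat.pow_lt_pow_iff_right (by norm_num)).1 ((Nat.ge_two_pow_of_testBit hi).trans_lt hk)
  · by_contra hb
    have := h (by simpa using hb)
    omega

open Finset in
lemma card_filter_testBit (N : ℕ) {P : Finset ℕ} (hP : P ⊆ range N) :
    #{k ∈ range (2 ^ N) | ∀ q ∈ P, k.testBit q} = 2 ^ (N - #P) := by
  rw [← card_range N, ← card_Icc_finset hP, ← card_map equivBitIndices.toEmbedding]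
  congr 1
  ext t
  obtain ⟨k, rfl⟩ := equivBitIndices.surjective t
  simp [lt_two_pow_iff_bitIndices_subset, Finset.subset_iff, and_comm]

lemma rbit_eq_testBit_floor {x : ℝ} (hx : 0 ≤ x) {l N : ℕ} (hl : l < N) :
    rbit l x = (⌊x * 2 ^ N⌋₊).testBit (N - 1 - l) := by
  have hsplit : x * 2 ^ (l + 1) = x * 2 ^ N / ((2 ^ (N - 1 - l) : ℕ) : ℝ) := by
    rw [eq_div_iff (by positivity), Nat.cast_pow, Nat.cast_ofNat, mul_assoc, ← pow_add]
    congr 2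
    omega
  have hfloor : ⌊x * 2 ^ (l + 1)⌋ = ((⌊x * 2 ^ N⌋₊ / 2 ^ (N - 1 - l) : ℕ) : ℤ) := by
    rw [hsplit, Int.floor_div_natCast, ← Int.natCast_floor_eq_floor (by positivity)]
    push_cast
    rfl
  rw [rbit, hfloor, Nat.testBit_eq_decide_div_mod_eq]
  simp only [decide_eq_decide]
  omega

lemma measure_floor_mul_two_pow_eq {N k : ℕ} (hk : k < 2 ^ N) :
    μ₀ ((fun x : ℝ => ⌊x * 2 ^ N⌋₊) ⁻¹' {k}) = 2⁻¹ ^ N := by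
  have h2N : (0 : ℝ) < 2 ^ N := by positivity
  have hk' : (k : ℝ) + 1 ≤ 2 ^ N := by exact_mod_cast hk
  have hset : (fun x : ℝ => ⌊x * 2 ^ N⌋₊) ⁻¹' {k} ∩ Ico 0 1 =
      Ico ((k : ℝ) / 2 ^ N) ((k + 1) / 2 ^ N) := by
    ext x
    simp only [Set.mem_inter_iff, Set.mem_preimage, Set.mem_singleton_iff, Set.mem_Ico,
      div_le_iff₀ h2N, lt_div_iff₀ h2N]
    constructor
    · rintro ⟨hx, hx0, -⟩
      exact (Nat.floor_eq_iff (by positivity)).1 hx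
    · rintro ⟨h1, h2⟩
      have hx0 : 0 ≤ x := by
        have : (0 : ℝ) ≤ x * 2 ^ N := (Nat.cast_nonneg k).trans h1
        exact nonneg_of_mul_nonneg_left this h2N
      refine ⟨(Nat.floor_eq_iff (by positivity)).2 ⟨h1, h2⟩, hx0, ?_⟩
      nlinarith
  rw [Measure.restrict_apply' measurableSet_Ico, hset, Real.volume_Ico, div_sub_div_same,
    add_sub_cancel_left, one_div, ENNReal.ofReal_inv_of_pos h2N, ENNReal.ofReal_pow zero_le_two,
    ENNReal.ofReal_ofNat, ENNReal.inv_pow]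

def bitSet (l : ℕ) : Set ℝ := {x | rbit l x = true}

lemma measurable_rbit (l : ℕ) : Measurable (rbit l) :=
  measurable_to_bool <| by
    have : rbit l ⁻¹' {true} = (fun x : ℝ => ⌊x * 2 ^ (l + 1)⌋) ⁻¹' {z : ℤ | z % 2 = 1} := by
      ext x; simp [rbit]
    rw [this]
    exact (measurable_id.mul_const _).floor (Set.to_countable _).measurableSet

lemma measurableSet_bitSet (l : ℕ) : MeasurableSet (bitSet l) :=
  measurable_rbit l (measurableSet_singleton true)

open Finset in
lemma measure_biInter_bitSet (s : Finset ℕ) : μ₀ (⋂ l ∈ s, bitSet l) = 2⁻¹ ^ #s := by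
  set N := s.sup id + 1
  have hsN : ∀ l ∈ s, l < N := fun l hl => Nat.lt_succ_of_le (le_sup (f := id) hl)
  set P := s.image (N - 1 - ·)
  have hP : P ⊆ range N := fun q hq => by
    obtain ⟨l, -, rfl⟩ := mem_image.1 hq
    exact mem_range.2 (by omega)
  have hcard : #P = #s := card_image_of_injOn fun a ha b hb (h : N - 1 - a = N - 1 - b) => by
    have := hsN a ha; have := hsN b hb; omega
  set K := {k ∈ range (2 ^ N) | ∀ q ∈ P, k.testBit q}
  have hfloor : Measurable fun x : ℝ => ⌊x * 2 ^ N⌋₊ := (measurable_id.mul_const _).nat_floor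
  have hpre : μ₀ (⋂ l ∈ s, bitSet l) = μ₀ ((fun x : ℝ => ⌊x * 2 ^ N⌋₊) ⁻¹' K) := by
    rw [Measure.restrict_apply' measurableSet_Ico, Measure.restrict_apply' measurableSet_Ico]
    congr 1
    ext x
    refine and_congr_left fun hx => ?_
    have hlt : ⌊x * 2 ^ N⌋₊ < 2 ^ N := (Nat.floor_lt (mul_nonneg hx.1 (by positivity))).2 <| by
      exact_mod_cast mul_lt_of_lt_one_left (by positivity) hx.2
    simp only [Set.mem_iInter, Set.mem_preimage, mem_coe, K, mem_filter, Finset.mem_range,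
      P, Finset.forall_mem_image, hlt, true_and]
    exact forall₂_congr fun l hl => by
      rw [bitSet, Set.mem_ofPred_eq, rbit_eq_testBit_floor hx.1 (hsN l hl)]
  have hsN' : #s ≤ N := by
    simpa using Finset.card_le_card fun l hl => Finset.mem_range.2 (hsN l hl)
  rw [hpre, ← sum_measure_preimage_singleton _ fun k _ => hfloor (measurableSet_singleton k),
    Finset.sum_eq_card_nsmul fun k hk =>
      measure_floor_mul_two_pow_eq (Finset.mem_range.1 (mem_filter.1 hk).1),
    card_filter_testBit N hP, hcard, nsmul_eq_mul, Nat.cast_pow, Nat.cast_ofNat]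
  calc (2 : ℝ≥0∞) ^ (N - #s) * 2⁻¹ ^ N = (2 * 2⁻¹) ^ (N - #s) * 2⁻¹ ^ #s := by
        rw [mul_pow, mul_assoc, ← pow_add, Nat.sub_add_cancel hsN']
    _ = 2⁻¹ ^ #s := by
        rw [ENNReal.mul_inv_cancel two_ne_zero ENNReal.ofNat_ne_top, one_pow, one_mul]

lemma iIndepSet_bitSet : iIndepSet bitSet μ₀ := by
  rw [iIndepSet_iff_meas_biInter measurableSet_bitSet]
  intro s
  rw [measure_biInter_bitSet, Finset.prod_eq_pow_card fun l _ => by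
    simpa using measure_biInter_bitSet {l}]

abbrev digitSigma (S : Set ℕ) : MeasurableSpace ℝ :=
  MeasurableSpace.generateFrom {t | ∃ l ∈ S, bitSet l = t}

lemma measurable_rbit_digitSigma {S : Set ℕ} {l : ℕ} (hl : l ∈ S) :
    Measurable[digitSigma S] (rbit l) :=
  @measurable_to_bool _ (digitSigma S) _ (MeasurableSpace.measurableSet_generateFrom ⟨l, hl, rfl⟩)

lemma summable_unifSeq_term (i : ℕ) (x : ℝ) :
    Summable fun j : ℕ => if rbit (Nat.pair i j) x then ((2 : ℝ) ^ (j + 1))⁻¹ else 0 := by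
  refine Summable.of_nonneg_of_le (fun j => by positivity) (fun j => ?_) summable_geometric_two
  split_ifs
  · rw [one_div_pow, one_div]
    exact inv_anti₀ (by positivity) (pow_le_pow_right₀ (one_le_two (α := ℝ)) j.le_succ)
  · positivity

lemma measurable_unifSeq {i : ℕ} {S : Set ℕ} (hS : ∀ j, Nat.pair i j ∈ S) :
    Measurable[digitSigma S] (unifSeq i) := by
  have hterm : ∀ j, Measurable[digitSigma S] fun x : ℝ =>
      if rbit (Nat.pair i j) x then ((2 : ℝ) ^ (j + 1))⁻¹ else 0 := fun j =>
    Measurable.ite (measurable_rbit_digitSigma (hS j) (measurableSet_singleton true))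
      measurable_const measurable_const
  refine @measurable_of_tendsto_metrizable ℝ ℝ (digitSigma S) _ _ _ _ _ _
    (fun J => Finset.measurable_sum (Finset.range J) fun j _ => hterm j) ?_
  exact tendsto_pi_nhds.2 fun x => (summable_unifSeq_term i x).hasSum.tendsto_sum_nat

lemma digitSigma_le (S : Set ℕ) : digitSigma S ≤ Real.measurableSpace :=
  MeasurableSpace.generateFrom_le fun _ ⟨l, _, hl⟩ => hl ▸ measurableSet_bitSet l

lemma measurable_decide_unifSeq_lt {i : ℕ} {S : Set ℕ} (hS : ∀ j, Nat.pair i j ∈ S) (c : ℝ) :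
    Measurable[digitSigma S] fun x => decide (unifSeq i x < c) :=
  @measurable_to_bool _ (digitSigma S) _ (by
    simpa [Set.preimage] using measurable_unifSeq hS measurableSet_Iio)

section Coordinates

variable {I : Type*}

abbrev coordSigma (r : Set I) : MeasurableSpace (I → Bool) :=
  ⨆ i ∈ r, MeasurableSpace.comap (fun ω => ω i) inferInstance

lemma coordSigma_le (r : Set I) : coordSigma r ≤ MeasurableSpace.pi :=
  iSup₂_le fun i _ => (measurable_pi_apply i).comap_le

lemma measurable_coordSigma_iff {α : Type*} {m : MeasurableSpace α} {f : α → I → Bool}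
    {r : Set I} : Measurable[m, coordSigma r] f ↔ ∀ i ∈ r, Measurable fun x => f x i := by
  simp only [measurable_iff_comap_le, coordSigma, MeasurableSpace.comap_iSup,
    MeasurableSpace.comap_comp, iSup₂_le_iff]
  rfl

lemma measurableSet_coordSigma_eq {r : Set I} {i : I} (hi : i ∈ r) (b : Bool) :
    MeasurableSet[coordSigma r] {ω : I → Bool | ω i = b} :=
  le_iSup₂ (f := fun i (_ : i ∈ r) => MeasurableSpace.comap (fun ω : I → Bool => ω i) _) i hi _
    ⟨{b}, measurableSet_singleton b, rfl⟩

lemma measurableSet_coordSigma_eqOn [Countable I] (r : Set I) (ω₀ : I → Bool) :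
    MeasurableSet[coordSigma r] {ω | EqOn ω ω₀ r} := by
  have : {ω : I → Bool | EqOn ω ω₀ r} = ⋂ e ∈ r, {ω | ω e = ω₀ e} := by ext; simp [EqOn]
  rw [this]
  exact .biInter r.to_countable fun e he => measurableSet_coordSigma_eq he _

theorem indep_coordSigma [hI : Countable I] (p : I → ℝ) {r t : Set I}
    (hrt : Disjoint r t) : Indep (coordSigma r) (coordSigma t) (bernoulliProduct I p) := by
  set enc := (@Countable.exists_injective_nat I hI).choose
  have henc : enc.Injective := (@Countable.exists_injective_nat I hI).choose_spec
  set F : ℝ → I → Bool := fun x i => decide (unifSeq (enc i) x < p i)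
  have hμ : bernoulliProduct I p = Measure.map F μ₀ := by rw [bernoulliProduct, dif_pos hI]
  let block : Set I → Set ℕ := fun s => {l | (Nat.unpair l).1 ∈ enc '' s}
  have hF : ∀ s, Measurable[digitSigma (block s), coordSigma s] F := fun s =>
    measurable_coordSigma_iff.2 fun i hi =>
      measurable_decide_unifSeq_lt (fun j => by simpa [block] using ⟨i, hi, rfl⟩) _
  have hFm : Measurable F := measurable_pi_lambda _ fun i =>
    (measurable_decide_unifSeq_lt (S := block {i}) (fun j => by simp [block]) _).mono
      (digitSigma_le _) le_rfl
  have hblock : Disjoint (block r) (block t) :=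
    ((Set.disjoint_image_iff henc).2 hrt).preimage _
  have hind := iIndepSet_bitSet.indep_generateFrom_of_disjoint measurableSet_bitSet _ _ hblock
  rw [Indep_iff] at hind ⊢
  intro A B hA hB
  have hA' := coordSigma_le r A hA
  have hB' := coordSigma_le t B hB
  rw [hμ, Measure.map_apply hFm hA', Measure.map_apply hFm hB', Measure.map_apply hFm (hA'.inter hB'),
    Set.preimage_inter]
  exact hind _ _ (hF r hA) (hF t hB)

end Coordinates

end Percolation

namespace SimpleGraph

variable {V : Type*} {G : SimpleGraph V}

theorem exists_walk_of_le_edist_le {u v : V} {n m : ℕ}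
    (h₁ : n ≤ G.edist u v) (h₂ : G.edist u v ≤ n + m) :
    ∃ w, G.edist u w = n ∧ ∃ q : G.Walk w v, q.length ≤ m ∧ ∀ x ∈ q.support, n ≤ G.edist u x := by
  classical
  obtain ⟨P, hP⟩ := exists_walk_of_edist_ne_top (ne_top_of_le_ne_top (ENat.natCast_ne_top _) h₂)
  rw [← hP] at h₁ h₂
  norm_cast at h₁ h₂
  have hfar : ∀ x ∈ (P.drop n).support, n ≤ G.edist u x := by
    intro x hx
    have hxv : G.edist x v ≤ (P.length - n : ℕ) := by
      refine (edist_le ((P.drop n).dropUntil x hx)).trans ?_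
      exact_mod_cast (Walk.length_dropUntil_le_length _ hx).trans (P.drop_length n).le
    have htri : (P.length : ℕ∞) ≤ G.edist u x + (P.length - n : ℕ) :=
      hP ▸ G.edist_triangle.trans (add_le_add le_rfl hxv)
    revert htri
    induction G.edist u x using ENat.recTopCoe with
    | top => simp
    | coe d => intro htri; norm_cast at htri ⊢; omega
  refine ⟨P.getVert n, le_antisymm ?_ (hfar _ (P.drop n).start_mem_support),
    P.drop n, by rw [Walk.drop_length]; omega, hfar⟩
  calc G.edist u (P.getVert n) ≤ (P.take n).length := edist_le _
    _ = n := by rw [Walk.take_length]; norm_cast; omega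

theorem finite_ball (hlf : G.LocallyFinite) (c : V) (n : ℕ) : (G.ball c n).Finite := by
  induction n with
  | zero => simp
  | succ n ih =>
    refine ((Set.finite_singleton c).union
      (ih.biUnion fun y _ => (G.neighborSet y).toFinite)).subset ?_
    intro x hx
    rw [mem_ball, Nat.cast_succ, ENat.lt_add_one_iff (ENat.natCast_ne_top n)] at hx
    obtain ⟨p, hp⟩ := exists_walk_of_edist_ne_top (ne_top_of_le_ne_top (ENat.natCast_ne_top n) hx)
    cases p with
    | nil => exact Or.inl rfl
    | @cons _ y _ hxy q =>
      refine Or.inr (Set.mem_biUnion (x := y) ?_ hxy.symm)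
      rw [mem_ball]
      calc G.edist y c ≤ q.length := edist_le q
        _ < n := by rw [← hp, Walk.length_cons] at hx; exact_mod_cast hx

theorem Connected.countable_of_locallyFinite (hconn : G.Connected) (hlf : G.LocallyFinite) :
    Countable V := by
  obtain ⟨c⟩ := hconn.nonempty
  refine Set.countable_univ_iff.1 <| (Set.countable_iUnion fun n : ℕ =>
    (G.finite_ball hlf c n).countable).mono fun x _ => mem_iUnion.2 ?_
  obtain ⟨k, hk⟩ := ENat.ne_top_iff_exists.1 (edist_ne_top_iff_reachable.2 (hconn x c))
  exact ⟨k + 1, by rw [mem_ball, ← hk]; exact_mod_cast k.lt_succ_self⟩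

end SimpleGraph

namespace Percolation

variable {V : Type*} {G : SimpleGraph V}

lemma openGraph_le (ω : Config G) : openGraph G ω ≤ G := fun _ _ h => h.1

lemma mem_edgeSet_openGraph {ω : Config G} {e : G.edgeSet} :
    (e : Sym2 V) ∈ (openGraph G ω).edgeSet ↔ ω e = true := by
  obtain ⟨e, he⟩ := e
  induction e using Sym2.ind with
  | _ a b => exact ⟨fun ⟨_, h⟩ => h, fun h => ⟨he, h⟩⟩

lemma isOpenWalk_cons {ω : Config G} {a b c : V} {h : G.Adj a b} {q : G.Walk b c} :
    IsOpenWalk G ω (.cons h q) ↔ ω ⟨s(a, b), G.mem_edgeSet.2 h⟩ = true ∧ IsOpenWalk G ω q := by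
  refine ⟨fun H => ⟨H _ (by simp), fun e he => H e (by simp [he])⟩, fun ⟨h₁, h₂⟩ e he => ?_⟩
  rcases List.mem_cons.1 he with rfl | he
  exacts [h₁, h₂ e he]

lemma exists_isOpenWalk_of_walk_openGraph {ω : Config G} {a b : V}
    (q : (openGraph G ω).Walk a b) :
    ∃ q' : G.Walk a b, q'.length = q.length ∧ q'.edges = q.edges ∧ IsOpenWalk G ω q' := by
  have hG : ∀ e ∈ q.edges, e ∈ G.edgeSet := fun e he =>
    SimpleGraph.edgeSet_mono (openGraph_le ω) (q.edges_subset_edgeSet he)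
  refine ⟨q.transfer G hG, q.length_transfer hG, q.edges_transfer hG, fun e he => ?_⟩
  rw [SimpleGraph.Walk.edges_transfer] at he
  exact mem_edgeSet_openGraph.1 (q.edges_subset_edgeSet he)

lemma edist_le_iff_exists_isOpenWalk (ω : Config G) (a b : V) (k : ℕ) :
    (openGraph G ω).edist a b ≤ k ↔ ∃ q : G.Walk a b, q.length ≤ k ∧ IsOpenWalk G ω q := by
  constructor
  · intro hk
    obtain ⟨P, hP⟩ := SimpleGraph.exists_walk_of_edist_ne_top
      (ne_top_of_le_ne_top (ENat.natCast_ne_top k) hk)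
    obtain ⟨q, hlen, -, hopen⟩ := exists_isOpenWalk_of_walk_openGraph P
    exact ⟨q, by rw [hlen]; exact_mod_cast hP ▸ hk, hopen⟩
  · rintro ⟨q, hq, hopen⟩
    have hω : ∀ e ∈ q.edges, e ∈ (openGraph G ω).edgeSet := fun e he =>
      mem_edgeSet_openGraph (e := ⟨e, q.edges_subset_edgeSet he⟩) |>.2 (hopen e he)
    calc (openGraph G ω).edist a b ≤ (q.transfer _ hω).length := SimpleGraph.edist_le _
      _ ≤ k := by rw [SimpleGraph.Walk.length_transfer]; exact_mod_cast hq

variable (G) in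
def exploredEdges (u : V) (n : ℕ) (ω : Config G) : Set G.edgeSet :=
  {e | ∃ x ∈ (e : Sym2 V), (openGraph G ω).edist u x < n}

section Exploration

variable {u : V} {n : ℕ} {ω ω₀ : Config G}

lemma isOpenWalk_iff_of_eqOn (h : EqOn ω ω₀ (exploredEdges G u n ω₀)) {y x : V}
    (q : G.Walk y x) (hq : (openGraph G ω₀).edist u y + q.length ≤ n) :
    IsOpenWalk G ω q ↔ IsOpenWalk G ω₀ q := by
  induction q with
  | nil => simp [IsOpenWalk]
  | @cons y z x hyz q ih =>
    rw [SimpleGraph.Walk.length_cons, Nat.cast_succ, ← add_assoc, add_right_comm] at hq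
    have hy₁ := le_self_add.trans hq
    have hy : (openGraph G ω₀).edist u y < n :=
      (ENat.add_one_le_iff' (ENat.natCast_ne_top n)).1 hy₁
    rw [isOpenWalk_cons, isOpenWalk_cons, h ⟨y, Sym2.mem_mk_left y z, hy⟩]
    refine and_congr_right fun hopen => ih ?_
    have hz : (openGraph G ω₀).edist u z ≤ (openGraph G ω₀).edist u y + 1 :=
      SimpleGraph.edist_triangle.trans (add_le_add le_rfl
        (SimpleGraph.edist_eq_one_iff_adj (G := openGraph G ω₀) |>.2 ⟨hyz, hopen⟩).le)
    calc _ ≤ (openGraph G ω₀).edist u y + 1 + q.length := add_le_add hz le_rfl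
      _ ≤ n := hq

lemma edist_le_iff_of_eqOn (h : EqOn ω ω₀ (exploredEdges G u n ω₀)) (x : V) {k : ℕ}
    (hk : k ≤ n) : (openGraph G ω).edist u x ≤ k ↔ (openGraph G ω₀).edist u x ≤ k := by
  simp only [edist_le_iff_exists_isOpenWalk]
  refine exists_congr fun q => and_congr_right fun hq => isOpenWalk_iff_of_eqOn h q ?_
  rw [SimpleGraph.edist_self, zero_add]
  exact_mod_cast hq.trans hk

lemma edist_lt_iff_of_eqOn (h : EqOn ω ω₀ (exploredEdges G u n ω₀)) (x : V) :
    (openGraph G ω).edist u x < n ↔ (openGraph G ω₀).edist u x < n := by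
  cases n with
  | zero => simp
  | succ k =>
    rw [Nat.cast_succ, ENat.lt_add_one_iff (ENat.natCast_ne_top k),
      ENat.lt_add_one_iff (ENat.natCast_ne_top k)]
    exact edist_le_iff_of_eqOn h x k.le_succ

lemma edist_eq_iff_of_eqOn (h : EqOn ω ω₀ (exploredEdges G u n ω₀)) (x : V) :
    (openGraph G ω).edist u x = n ↔ (openGraph G ω₀).edist u x = n := by
  rw [le_antisymm_iff, le_antisymm_iff, edist_le_iff_of_eqOn h x le_rfl,
    ← not_lt (b := (n : ℕ∞)), ← not_lt (b := (n : ℕ∞)), edist_lt_iff_of_eqOn h x]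

lemma exploredEdges_eq_of_eqOn (h : EqOn ω ω₀ (exploredEdges G u n ω₀)) :
    exploredEdges G u n ω = exploredEdges G u n ω₀ := by
  ext e
  exact exists_congr fun x => and_congr_right fun _ => edist_lt_iff_of_eqOn h x

variable (G) in
def exploredTrace (u : V) (n : ℕ) (ω : Config G) : Set (G.edgeSet × Bool) :=
  (fun e => (e, ω e)) '' exploredEdges G u n ω

lemma exploredTrace_eq_iff :
    exploredTrace G u n ω = exploredTrace G u n ω₀ ↔ EqOn ω ω₀ (exploredEdges G u n ω₀) := by
  refine ⟨fun h e he => ?_, fun h => ?_⟩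
  · have : (e, ω₀ e) ∈ exploredTrace G u n ω := h ▸ mem_image_of_mem _ he
    obtain ⟨e', -, he'⟩ := this
    obtain ⟨rfl, hω⟩ := Prod.mk.inj he'
    exact hω
  · rw [exploredTrace, exploredTrace, exploredEdges_eq_of_eqOn h]
    exact EqOn.image_eq fun e he => by simp [h he]

lemma image_fst_exploredTrace : Prod.fst '' exploredTrace G u n ω = exploredEdges G u n ω := by
  rw [exploredTrace, image_image, image_id']

lemma finite_exploredEdges (hlf : G.LocallyFinite) (u : V) (n : ℕ) (ω : Config G) :
    (exploredEdges G u n ω).Finite := by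
  classical
  refine (((G.finite_ball hlf u n).biUnion fun x _ => (G.incidenceSet x).toFinite).preimage
    Subtype.val_injective.injOn).subset ?_
  rintro ⟨e, he⟩ ⟨x, hx, hd⟩
  refine mem_iUnion₂.2 ⟨x, ?_, he, hx⟩
  rw [SimpleGraph.mem_ball, SimpleGraph.edist_comm]
  exact (SimpleGraph.edist_anti (openGraph_le ω)).trans_lt hd

end Exploration

variable (G) in
def openWalkAvoiding (r : Set G.edgeSet) (w v : V) (m : ℕ) : Set (Config G) :=
  {ω | ∃ q : G.Walk w v, q.length ≤ m ∧ IsOpenWalk G ω q ∧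
    ∀ e (he : e ∈ q.edges), (⟨e, q.edges_subset_edgeSet he⟩ : G.edgeSet) ∉ r}

lemma measurableSet_openWalkAvoiding [Countable V] (r : Set G.edgeSet) (w v : V) (m : ℕ) :
    MeasurableSet[coordSigma rᶜ] (openWalkAvoiding G r w v m) := by
  have : Countable (G.Walk w v) := SimpleGraph.Walk.support_injective.countable
  have heq : openWalkAvoiding G r w v m = ⋃ q : {q : G.Walk w v // q.length ≤ m ∧
      ∀ e (he : e ∈ q.edges), (⟨e, q.edges_subset_edgeSet he⟩ : G.edgeSet) ∉ r},
      ⋂ e : {e // e ∈ q.1.edges}, {ω | ω ⟨e.1, q.1.edges_subset_edgeSet e.2⟩ = true} := by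
    ext ω
    simp only [openWalkAvoiding, IsOpenWalk, mem_iUnion, mem_iInter, Subtype.exists, Subtype.forall]
    exact ⟨fun ⟨q, hl, ho, hr⟩ => ⟨q, ⟨hl, hr⟩, ho⟩, fun ⟨q, ⟨hl, hr⟩, ho⟩ => ⟨q, hl, ho, hr⟩⟩
  rw [heq]
  exact .iUnion fun q => .iInter fun e => measurableSet_coordSigma_eq (q.2.2 e.1 e.2) true

variable (G) in
def tracesWithEdist (u w : V) (n : ℕ) : Set (Set (G.edgeSet × Bool)) :=
  exploredTrace G u n '' {ω | (openGraph G ω).edist u w = n}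

lemma preimage_exploredTrace_singleton (u : V) (n : ℕ) (ω₀ : Config G) :
    exploredTrace G u n ⁻¹' {exploredTrace G u n ω₀} = {ω | EqOn ω ω₀ (exploredEdges G u n ω₀)} :=
  ext fun _ => exploredTrace_eq_iff

lemma countable_tracesWithEdist [Countable V] (hlf : G.LocallyFinite) (u w : V) (n : ℕ) :
    (tracesWithEdist G u w n).Countable :=
  Set.Countable.ofPred_finite.mono <| by
    rintro _ ⟨ω, -, rfl⟩
    exact (finite_exploredEdges hlf u n ω).image _

lemma measure_inter_openWalkAvoiding_le [Countable V] (p : ℝ) (u v w : V) (n m : ℕ)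
    (ω₀ : Config G) :
    percMeasure G p (exploredTrace G u n ⁻¹' {exploredTrace G u n ω₀} ∩
        openWalkAvoiding G (exploredEdges G u n ω₀) w v m) ≤
      percMeasure G p (exploredTrace G u n ⁻¹' {exploredTrace G u n ω₀}) * BintMat G p m w v := by
  rw [preimage_exploredTrace_singleton, percMeasure, (Indep_iff _ _ _).1
    (indep_coordSigma _ disjoint_compl_right) _ _ (measurableSet_coordSigma_eqOn _ ω₀)
    (measurableSet_openWalkAvoiding _ w v m)]
  refine mul_le_mul_right (measure_mono ?_) _
  rintro ω ⟨q, hq, hopen, -⟩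
  exact (edist_le_iff_exists_isOpenWalk ω w v m).2 ⟨q, hq, hopen⟩

lemma tsum_measure_preimage_exploredTrace_le [Countable V] (hlf : G.LocallyFinite) (p : ℝ)
    (u w : V) (n : ℕ) :
    ∑' T : tracesWithEdist G u w n, percMeasure G p (exploredTrace G u n ⁻¹' {T.1}) ≤
      SintMat G p n u w := by
  rw [← measure_biUnion (countable_tracesWithEdist hlf u w n)
    (fun T _ T' _ h => (disjoint_singleton.2 h).preimage _)]
  · refine measure_mono (iUnion₂_subset ?_)
    rintro _ ⟨ω₀, hω₀, rfl⟩ ω hω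
    exact (edist_eq_iff_of_eqOn (exploredTrace_eq_iff.1 hω) w).2 hω₀
  · rintro _ ⟨ω₀, -, rfl⟩
    rw [preimage_exploredTrace_singleton]
    exact coordSigma_le _ _ (measurableSet_coordSigma_eqOn _ ω₀)

lemma setOf_le_edist_le_subset (u v : V) (n m : ℕ) :
    {ω : Config G | (n : ℕ∞) ≤ (openGraph G ω).edist u v ∧
        (openGraph G ω).edist u v ≤ ((n + m : ℕ) : ℕ∞)} ⊆
      ⋃ w, ⋃ T ∈ tracesWithEdist G u w n,
        exploredTrace G u n ⁻¹' {T} ∩ openWalkAvoiding G (Prod.fst '' T) w v m := by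
  rintro ω ⟨h₁, h₂⟩
  obtain ⟨w, hw, q, hq, hfar⟩ := SimpleGraph.exists_walk_of_le_edist_le h₁ (by exact_mod_cast h₂)
  obtain ⟨q', hlen, hedges, hopen⟩ := exists_isOpenWalk_of_walk_openGraph q
  refine mem_iUnion.2 ⟨w, mem_biUnion ⟨ω, hw, rfl⟩ ⟨rfl, q', hlen ▸ hq, hopen, ?_⟩⟩
  intro e he
  rw [image_fst_exploredTrace]
  rintro ⟨x, hx, hd⟩
  exact (hfar x (SimpleGraph.Walk.mem_support_of_mem_edges (hedges ▸ he) hx)).not_gt hd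

end Percolation

theorem statement_6_general {V : Type*} (G : SimpleGraph V) (hconn : G.Connected)
    (hlf : G.LocallyFinite) (p : ℝ) (n m : ℕ) (u v : V) :
    AintMat G p n (n + m) u v ≤ ∑' w : V, SintMat G p n u w * BintMat G p m w v := by
  have := hconn.countable_of_locallyFinite hlf
  calc AintMat G p n (n + m) u v
      ≤ ∑' w, ∑' T : tracesWithEdist G u w n, percMeasure G p
          (exploredTrace G u n ⁻¹' {T.1} ∩ openWalkAvoiding G (Prod.fst '' T.1) w v m) :=
        (measure_mono (setOf_le_edist_le_subset u v n m)).trans <| (measure_iUnion_le _).trans <|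
          ENNReal.tsum_le_tsum fun w => measure_biUnion_le _ (countable_tracesWithEdist hlf u w n) _
    _ ≤ ∑' w, ∑' T : tracesWithEdist G u w n,
          percMeasure G p (exploredTrace G u n ⁻¹' {T.1}) * BintMat G p m w v := by
        gcongr with w T
        obtain ⟨ω₀, -, hT⟩ := T.2
        rw [← hT, image_fst_exploredTrace]
        exact measure_inter_openWalkAvoiding_le p u v w n m ω₀
    _ = ∑' w, (∑' T : tracesWithEdist G u w n, percMeasure G p (exploredTrace G u n ⁻¹' {T.1})) *
          BintMat G p m w v := by simp_rw [ENNReal.tsum_mul_right]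
    _ ≤ ∑' w, SintMat G p n u w * BintMat G p m w v := by
        gcongr with w
        exact tsum_measure_preimage_exploredTrace_le hlf p u w n

/-- For a connected, locally finite graph `G`, `p ∈ [0,1]` and
`n, m ≥ 0`, entrywise `A^int_{p,n,n+m} ≼ S^int_{p,n} B^int_{p,m}`, i.e.
`A^int_{p,n,n+m}(u,v) ≤ Σ_w S^int_{p,n}(u,w) B^int_{p,m}(w,v)` for all `u, v`. -/
theorem statement_6 {V : Type*} (G : SimpleGraph V) (hconn : G.Connected)
    (hlf : G.LocallyFinite) (p : ℝ) (hp : p ∈ Set.Icc (0 : ℝ) 1) (n m : ℕ) (u v : V) :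
    AintMat G p n (n + m) u v ≤ ∑' w : V, SintMat G p n u w * BintMat G p m w v :=
  statement_6_general G hconn hlf p n m u v
end
end

section
/- Let G=(V,E) be a graph, let M∈[0,∞]^{V×V} be a nonnegative matrix, and let 1 ≤ q_1 < q_2 ≤ ∞. Then ‖M‖_{q_2→q_2} ≤ ‖M‖_{q_1→q_1} · [sup_{v∈V} |{u∈V : M(v,u) ≠ 0}|]^{(q_2−q_1)/(q_1 q_2)}, with the convention that the exponent (q_2−q_1)/(q_1 q_2) equals 1/q_1 when q_2 = ∞. -/
open MeasureTheory Filter Set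
open scoped ENNReal NNReal

noncomputable section

open Percolation MeasureTheory Filter Set
open scoped ENNReal

/-! Testing `M` against the indicator of the support of a row bounds the row sums,
`∑_u M(v,u) ≤ ‖M‖_{q₁→q₁} · |supp M(v,·)|^{1/q₁}`, so `‖M‖_{∞→∞} = sup_v ∑_u M(v,u)` is at
most `‖M‖_{q₁→q₁} D^{1/q₁}`, where `D` is the largest row support. For finite `q₂`, Hölder's
inequality on each row, applied to `f^{q₂/q₁}`, interpolates between the exponents `q₁` and `∞`:
`‖M‖_{q₂→q₂} ≤ ‖M‖_{∞→∞}^{1-q₁/q₂} ‖M‖_{q₁→q₁}^{q₁/q₂}`, which gives the exponent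
`(1 - q₁/q₂)/q₁ = (q₂-q₁)/(q₁q₂)`. -/

theorem ENNReal.inner_le_weight_mul_Lp_tsum {ι : Type*} (w f : ι → ℝ≥0∞) {p : ℝ}
    (hp : 1 ≤ p) :
    ∑' i, w i * f i ≤ (∑' i, w i) ^ (1 - p⁻¹) * (∑' i, w i * f i ^ p) ^ p⁻¹ := by
  rw [ENNReal.tsum_eq_iSup_sum]
  refine iSup_le fun s => (ENNReal.inner_le_weight_mul_Lp_of_nonneg s hp w f).trans ?_
  gcongr
  · exact sub_nonneg.mpr (inv_le_one_of_one_le₀ hp)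
  · exact ENNReal.sum_le_tsum s
  · exact ENNReal.sum_le_tsum s

namespace Percolation

variable {V : Type*} {M : V → V → ℝ≥0∞} {q : ℝ≥0∞}

theorem lqNorm_rpow_toReal (hq0 : q ≠ 0) (hq : q ≠ ∞) (f : V → ℝ≥0∞) :
    lqNorm q f ^ q.toReal = ∑' v, f v ^ q.toReal := by
  rw [lqNorm, if_neg hq, one_div, ENNReal.rpow_inv_rpow (ENNReal.toReal_ne_zero.mpr ⟨hq0, hq⟩)]

theorem le_lqNorm (hq0 : q ≠ 0) (f : V → ℝ≥0∞) (v : V) : f v ≤ lqNorm q f := by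
  by_cases hq : q = ∞
  · rw [lqNorm, if_pos hq]
    exact le_iSup f v
  · have hq' : 0 < q.toReal := ENNReal.toReal_pos hq0 hq
    rw [← ENNReal.rpow_le_rpow_iff hq', lqNorm_rpow_toReal hq0 hq]
    exact ENNReal.le_tsum v

theorem lqNorm_zero (hq0 : q ≠ 0) : lqNorm q (0 : V → ℝ≥0∞) = 0 := by
  by_cases hq : q = ∞
  · simp [lqNorm, hq]
  · simp [lqNorm, hq, ENNReal.zero_rpow_of_pos (ENNReal.toReal_pos hq0 hq),
      ENNReal.toReal_pos hq0 hq]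

theorem lqNorm_indicator_one (hq0 : q ≠ 0) (hq : q ≠ ∞) (s : Set V) :
    lqNorm q (s.indicator 1) = (s.encard : ℝ≥0∞) ^ (1 / q.toReal) := by
  have hq' : 0 < q.toReal := ENNReal.toReal_pos hq0 hq
  have hpow : ∀ v, s.indicator (1 : V → ℝ≥0∞) v ^ q.toReal = s.indicator 1 v := fun v => by
    by_cases hv : v ∈ s <;> simp [hv, ENNReal.zero_rpow_of_pos hq']
  rw [lqNorm, if_neg hq, tsum_congr hpow, ← tsum_subtype, ← ENNReal.tsum_set_one]
  rfl

theorem matMul_indicator_one (M : V → V → ℝ≥0∞) (s : Set V) (v : V) :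
    matMul M (s.indicator 1) v = ∑' u : s, M v u := by
  rw [matMul, tsum_subtype]
  congr 1
  ext u
  by_cases hu : u ∈ s <;> simp [hu]

theorem div_le_opNorm {f : V → ℝ≥0∞} (h0 : f ≠ 0) (ht : lqNorm q f ≠ ∞) :
    lqNorm q (matMul M f) / lqNorm q f ≤ opNorm q M :=
  le_iSup (fun g : {g : V → ℝ≥0∞ // g ≠ 0 ∧ lqNorm q g ≠ ∞} =>
    lqNorm q (matMul M g.1) / lqNorm q g.1) ⟨f, h0, ht⟩

theorem opNorm_le {C : ℝ≥0∞} (h : ∀ f, lqNorm q (matMul M f) ≤ C * lqNorm q f) :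
    opNorm q M ≤ C :=
  iSup_le fun f => ENNReal.div_le_of_le_mul (h f.1)

theorem apply_le_opNorm (hq0 : q ≠ 0) (hq : q ≠ ∞) (v u : V) : M v u ≤ opNorm q M := by
  have hnorm : lqNorm q (({u} : Set V).indicator 1) = 1 := by
    rw [lqNorm_indicator_one hq0 hq, Set.encard_singleton]
    simp
  have h0 : ({u} : Set V).indicator (1 : V → ℝ≥0∞) ≠ 0 := fun h => by
    simpa using congrFun h u
  calc M v u = matMul M (({u} : Set V).indicator 1) v := by
        rw [matMul_indicator_one, tsum_singleton]
    _ ≤ lqNorm q (matMul M (({u} : Set V).indicator 1)) := le_lqNorm hq0 _ v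
    _ ≤ opNorm q M := by
        simpa [hnorm] using div_le_opNorm (M := M) (q := q) h0 (by simp [hnorm])

theorem lqNorm_matMul_le (hq0 : q ≠ 0) (hq : q ≠ ∞) (f : V → ℝ≥0∞) :
    lqNorm q (matMul M f) ≤ opNorm q M * lqNorm q f := by
  by_cases hMf : matMul M f = 0
  · rw [hMf, lqNorm_zero hq0]
    exact zero_le
  have hf0 : f ≠ 0 := by
    rintro rfl
    exact hMf (funext fun v => by simp [matMul])
  have hM : opNorm q M ≠ 0 := fun hM => hMf <| funext fun v => by
    simp [matMul, fun u => nonpos_iff_eq_zero.mp (hM ▸ apply_le_opNorm hq0 hq v u)]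
  by_cases ht : lqNorm q f = ∞
  · simp [ht, hM]
  obtain ⟨u, hu⟩ := Function.ne_iff.mp hf0
  have hne : lqNorm q f ≠ 0 := fun h => hu (nonpos_iff_eq_zero.mp (h ▸ le_lqNorm hq0 f u))
  exact (ENNReal.div_le_iff hne ht).mp (div_le_opNorm hf0 ht)

theorem tsum_le_opNorm_mul_encard_rpow (hq0 : q ≠ 0) (hq : q ≠ ∞) (v : V) :
    ∑' u, M v u ≤ opNorm q M * ({u | M v u ≠ 0}.encard : ℝ≥0∞) ^ (1 / q.toReal) := by
  set s := {u | M v u ≠ 0}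
  calc ∑' u, M v u = matMul M (s.indicator 1) v := by
        rw [matMul_indicator_one, tsum_subtype_eq_of_support_subset (s := s) fun u hu => hu]
    _ ≤ lqNorm q (matMul M (s.indicator 1)) := le_lqNorm hq0 _ v
    _ ≤ _ := by
        rw [← lqNorm_indicator_one hq0 hq]
        exact lqNorm_matMul_le hq0 hq _

theorem opNorm_top_le_iSup_tsum (M : V → V → ℝ≥0∞) : opNorm ∞ M ≤ ⨆ v, ∑' u, M v u :=
  opNorm_le fun f => by
    simp only [lqNorm, if_pos]
    refine iSup_le fun v => ?_
    calc matMul M f v ≤ ∑' u, M v u * ⨆ w, f w :=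
          ENNReal.tsum_le_tsum fun u => by gcongr; exact le_iSup f u
      _ = (∑' u, M v u) * ⨆ w, f w := ENNReal.tsum_mul_right
      _ ≤ _ := by gcongr; exact le_iSup (fun v => ∑' u, M v u) v

theorem lqNorm_rpow_div_rpow_toReal {q₁ q₂ : ℝ≥0∞} (hq₁0 : q₁ ≠ 0) (hq₁ : q₁ ≠ ∞)
    (hq₂0 : q₂ ≠ 0) (hq₂ : q₂ ≠ ∞) (f : V → ℝ≥0∞) :
    lqNorm q₁ (fun v => f v ^ (q₂.toReal / q₁.toReal)) ^ q₁.toReal =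
      lqNorm q₂ f ^ q₂.toReal := by
  rw [lqNorm_rpow_toReal hq₁0 hq₁, lqNorm_rpow_toReal hq₂0 hq₂]
  refine tsum_congr fun v => ?_
  rw [← ENNReal.rpow_mul, div_mul_cancel₀ _ (ENNReal.toReal_pos hq₁0 hq₁).ne']

theorem opNorm_le_interpolation {q₁ q₂ : ℝ≥0∞} (hq₁0 : q₁ ≠ 0) (h12 : q₁ ≤ q₂)
    (hq₂ : q₂ ≠ ∞) :
    opNorm q₂ M ≤ (⨆ v, ∑' u, M v u) ^ (1 - q₁.toReal / q₂.toReal) *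
      opNorm q₁ M ^ (q₁.toReal / q₂.toReal) := by
  have hq₁ : q₁ ≠ ∞ := ne_top_of_le_ne_top hq₂ h12
  have hq₂0 : q₂ ≠ 0 := (pos_iff_ne_zero.mpr hq₁0 |>.trans_le h12).ne'
  set p₁ := q₁.toReal
  set p₂ := q₂.toReal
  have hp₁ : 0 < p₁ := ENNReal.toReal_pos hq₁0 hq₁
  have hp₂ : 0 < p₂ := ENNReal.toReal_pos hq₂0 hq₂
  have hp : p₁ ≤ p₂ := ENNReal.toReal_mono hq₂ h12
  have hθ : 0 ≤ 1 - p₁ / p₂ := sub_nonneg.mpr ((div_le_one hp₂).mpr hp)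
  set R := ⨆ v, ∑' u, M v u
  set N := opNorm q₁ M
  refine opNorm_le fun f => ?_
  set g : V → ℝ≥0∞ := fun u => f u ^ (p₂ / p₁)
  have hrow (v : V) : matMul M f v ≤ R ^ (1 - p₁ / p₂) * matMul M g v ^ (p₁ / p₂) := by
    have holder := ENNReal.inner_le_weight_mul_Lp_tsum (M v) f ((one_le_div hp₁).mpr hp)
    rw [inv_div] at holder
    refine holder.trans ?_
    gcongr
    · exact le_iSup (fun v => ∑' u, M v u) v
    · exact le_rfl
  rw [← ENNReal.rpow_le_rpow_iff hp₂]
  calc lqNorm q₂ (matMul M f) ^ p₂ = ∑' v, matMul M f v ^ p₂ := lqNorm_rpow_toReal hq₂0 hq₂ _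
    _ ≤ ∑' v, (R ^ (1 - p₁ / p₂) * matMul M g v ^ (p₁ / p₂)) ^ p₂ :=
        ENNReal.tsum_le_tsum fun v => by gcongr; exact hrow v
    _ = R ^ ((1 - p₁ / p₂) * p₂) * lqNorm q₁ (matMul M g) ^ p₁ := by
        rw [lqNorm_rpow_toReal hq₁0 hq₁, ← ENNReal.tsum_mul_left]
        refine tsum_congr fun v => ?_
        rw [ENNReal.mul_rpow_of_nonneg _ _ hp₂.le, ← ENNReal.rpow_mul, ← ENNReal.rpow_mul,
          div_mul_cancel₀ _ hp₂.ne']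
    _ ≤ R ^ ((1 - p₁ / p₂) * p₂) * (N * lqNorm q₁ g) ^ p₁ := by
        gcongr
        exact lqNorm_matMul_le hq₁0 hq₁ g
    _ = (R ^ (1 - p₁ / p₂) * N ^ (p₁ / p₂) * lqNorm q₂ f) ^ p₂ := by
        rw [ENNReal.mul_rpow_of_nonneg _ _ hp₁.le,
          lqNorm_rpow_div_rpow_toReal hq₁0 hq₁ hq₂0 hq₂, ENNReal.mul_rpow_of_nonneg _ _ hp₂.le,
          ENNReal.mul_rpow_of_nonneg _ _ hp₂.le, ← ENNReal.rpow_mul, ← ENNReal.rpow_mul,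
          div_mul_cancel₀ _ hp₂.ne', mul_assoc]

end Percolation

/-- For any nonnegative matrix `M ∈ [0,∞]^{V×V}` and
`1 ≤ q₁ < q₂ ≤ ∞`,
`‖M‖_{q₂→q₂} ≤ ‖M‖_{q₁→q₁} · (sup_v |{u : M(v,u) ≠ 0}|)^{(q₂-q₁)/(q₁q₂)}`,
where the exponent is `1/q₁` when `q₂ = ∞`. -/
theorem statement_12 {V : Type*} (M : V → V → ℝ≥0∞) (q₁ q₂ : ℝ≥0∞)
    (h1 : 1 ≤ q₁) (h12 : q₁ < q₂) :
    opNorm q₂ M ≤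
      opNorm q₁ M *
        (⨆ v : V, (({u : V | M v u ≠ 0}.encard : ℕ∞) : ℝ≥0∞)) ^
          (if q₂ = ∞ then 1 / q₁.toReal
           else (q₂.toReal - q₁.toReal) / (q₁.toReal * q₂.toReal)) := by
  have hq₁0 : q₁ ≠ 0 := (zero_lt_one.trans_le h1).ne'
  have hq₁ : q₁ ≠ ∞ := h12.ne_top
  set N := opNorm q₁ M
  set D := ⨆ v : V, (({u : V | M v u ≠ 0}.encard : ℕ∞) : ℝ≥0∞)
  have hrow : ⨆ v, ∑' u, M v u ≤ N * D ^ (1 / q₁.toReal) := iSup_le fun v =>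
    (tsum_le_opNorm_mul_encard_rpow hq₁0 hq₁ v).trans <| by
      gcongr
      exact le_iSup (fun v => (({u : V | M v u ≠ 0}.encard : ℕ∞) : ℝ≥0∞)) v
  by_cases hq₂ : q₂ = ∞
  · rw [if_pos hq₂, hq₂]
    exact (opNorm_top_le_iSup_tsum M).trans hrow
  have hp₂ : 0 < q₂.toReal := ENNReal.toReal_pos (h12.trans_le' zero_le).ne' hq₂
  have hθ₀ : 0 ≤ q₁.toReal / q₂.toReal := by positivity
  have hθ₁ : 0 ≤ 1 - q₁.toReal / q₂.toReal :=
    sub_nonneg.mpr ((div_le_one hp₂).mpr (ENNReal.toReal_mono hq₂ h12.le))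
  rw [if_neg hq₂]
  calc opNorm q₂ M ≤ (⨆ v, ∑' u, M v u) ^ (1 - q₁.toReal / q₂.toReal) *
        N ^ (q₁.toReal / q₂.toReal) := opNorm_le_interpolation hq₁0 h12.le hq₂
    _ ≤ (N * D ^ (1 / q₁.toReal)) ^ (1 - q₁.toReal / q₂.toReal) *
        N ^ (q₁.toReal / q₂.toReal) := by gcongr
    _ = N * D ^ ((q₂.toReal - q₁.toReal) / (q₁.toReal * q₂.toReal)) := by
        rw [ENNReal.mul_rpow_of_nonneg _ _ hθ₁, ← ENNReal.rpow_mul, mul_right_comm,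
          ← ENNReal.rpow_add_of_nonneg _ _ hθ₁ hθ₀, sub_add_cancel, ENNReal.rpow_one]
        congr 2
        field_simp
end
end
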